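/- Consider an L-layer GIN with parameter ζ ≥ 0 as below, on a graph with 0/1 adjacency matrix A ∈ ℝ^{n×n} of maximum degree Δ, with every weight matrix satisfying ‖W^{(ℓ)}‖_∞ ≥ 1. Let X, X' ∈ ℝ^{n×K} with ‖X_v − X'_v‖_∞ ≤ ε for every node v, and suppose that at every intermediate layer ℓ ∈ {0, …, L−1} the hidden-state rows of the two runs satisfy ‖H^{(ℓ)}_v − H'^{(ℓ)}_v‖_∞ ≤ B for all v. Then for every node u: ‖H^{(L)}_u − H'^{(L)}_u‖_∞ ≤ (∏_{ℓ=1}^{L} ‖W^{(ℓ)}‖_∞) · (B · Δ · Σ_{l=1}^{L} (1+ζ)^l + (1+ζ)^L · ε). -/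

import Mathlib

open scoped BigOperators

/-!
Let `D k u` be the `ℓ∞` distance between the two runs at node `u` after `k` layers. As the
activation is 1-Lipschitz and `h ↦ hW` has `ℓ∞` operator norm `‖W‖_∞`, a layer with weight
`W` gives `D (k+1) u ≤ ‖W‖_∞ ((1+ζ) D k u + Δ B)`: the self term is carried along exactly, while the
at most `Δ` neighbour terms are bounded by `B`. Since all weights have norm at least `1`,
unrolling this recurrence gives the bound.
-/

/-- An `L`-layer GIN with parameter `ζ`: `H⁽⁰⁾ = X` and
`H⁽ˡ⁺¹⁾ = φ⁽ˡ⁺¹⁾((A + (1+ζ)·I) H⁽ˡ⁾ W⁽ˡ⁺¹⁾)`, the activation applied entrywise. -/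
noncomputable def gin {n : ℕ} (d : ℕ → ℕ) (ζ : ℝ) (φ : ℕ → ℝ → ℝ)
    (A : Matrix (Fin n) (Fin n) ℝ)
    (W : (ℓ : ℕ) → Matrix (Fin (d ℓ)) (Fin (d (ℓ + 1))) ℝ)
    (X : Matrix (Fin n) (Fin (d 0)) ℝ) : (ℓ : ℕ) → Matrix (Fin n) (Fin (d ℓ)) ℝ
  | 0 => X
  | (ℓ + 1) =>
      ((A + (1 + ζ) • (1 : Matrix (Fin n) (Fin n) ℝ)) * gin d ζ φ A W X ℓ * W ℓ).map
        (φ (ℓ + 1))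

/-- The operator norm of the map `h ↦ hW` on row vectors with respect to the `ℓ∞`
norm: the maximum absolute column sum of `W`. -/
noncomputable def opNormInf {m e : ℕ} (W : Matrix (Fin m) (Fin e) ℝ) : ℝ :=
  ⨆ j : Fin e, ∑ i : Fin m, |W i j|

open Finset Matrix

section LinftyOpNorm

attribute [local instance] Matrix.linftyOpNormedAddCommGroup

theorem opNormInf_eq_norm_transpose {m e : ℕ} (W : Matrix (Fin m) (Fin e) ℝ) :
    opNormInf W = ‖Wᵀ‖ := by
  rw [linfty_opNorm_def, sup_univ_eq_ciSup, NNReal.coe_iSup]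
  simp [opNormInf]

theorem opNormInf_nonneg {m e : ℕ} (W : Matrix (Fin m) (Fin e) ℝ) : 0 ≤ opNormInf W :=
  opNormInf_eq_norm_transpose W ▸ norm_nonneg _

theorem norm_vecMul_le_opNormInf_mul {m e : ℕ} (x : Fin m → ℝ) (W : Matrix (Fin m) (Fin e) ℝ) :
    ‖x ᵥ* W‖ ≤ opNormInf W * ‖x‖ := by
  rw [opNormInf_eq_norm_transpose, ← mulVec_transpose]
  exact linfty_opNorm_mulVec _ _

end LinftyOpNorm

theorem sum_Icc_one_pow_succ {R : Type*} [CommSemiring R] (c : R) (L : ℕ) :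
    ∑ l ∈ Icc 1 (L + 1), c ^ l = c * ∑ l ∈ Icc 1 L, c ^ l + c := by
  induction L with
  | zero => simp
  | succ L ih =>
    conv_lhs => rw [sum_Icc_succ_top (by omega), ih]
    rw [sum_Icc_succ_top (by omega)]
    ring

theorem le_prod_mul_of_le_mul_add {a w : ℕ → ℝ} {c β ε : ℝ} {L : ℕ} (hc : 1 ≤ c) (hβ : 0 ≤ β)
    (hw : ∀ k < L, 1 ≤ w k) (h0 : a 0 ≤ ε) (hstep : ∀ k < L, a (k + 1) ≤ w k * (c * a k + β)) :
    a L ≤ (∏ k ∈ range L, w k) * (β * ∑ l ∈ Icc 1 L, c ^ l + c ^ L * ε) := by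
  induction L with
  | zero => simpa using h0
  | succ L ih =>
    have ha := ih (fun k hk => hw k (by omega)) (fun k hk => hstep k (by omega))
    set P := ∏ k ∈ range L, w k
    have hP : 1 ≤ P := one_le_prod fun k hk => hw k ((mem_range.1 hk).trans L.lt_succ_self)
    have hwL : 0 ≤ w L := zero_le_one.trans (hw L L.lt_succ_self)
    rw [prod_range_succ, sum_Icc_one_pow_succ, pow_succ']
    calc a (L + 1) ≤ w L * (c * a L + β) := hstep L L.lt_succ_self
      _ ≤ w L * (c * (P * (β * ∑ l ∈ Icc 1 L, c ^ l + c ^ L * ε)) + β) := by gcongr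
      _ ≤ P * w L * (β * (c * ∑ l ∈ Icc 1 L, c ^ l + c) + c * c ^ L * ε) := by
        -- the `β` entering at this layer is absorbed because `P * c ≥ 1`
        have : β ≤ β * (P * c) := le_mul_of_one_le_right hβ (one_le_mul_of_one_le_of_one_le hP hc)
        nlinarith [mul_le_mul_of_nonneg_left this hwL]

theorem norm_mul_row_le_sum {ι κ o α : Type*} [SeminormedRing α] [Fintype κ] [Fintype o]
    (M : Matrix ι κ α) (E : Matrix κ o α) (u : ι) :
    ‖(M * E) u‖ ≤ ∑ v, ‖M u v‖ * ‖E v‖ := by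
  rw [mul_apply_eq_vecMul, vecMul_eq_sum]
  exact (norm_sum_le _ _).trans (sum_le_sum fun v _ => norm_smul_le _ _)

theorem norm_add_smul_one_mul_row_le {ι o : Type*} [Fintype ι] [DecidableEq ι] [Fintype o]
    {A : Matrix ι ι ℝ} (hA : ∀ i j, 0 ≤ A i j) {Δ : ℝ} (hΔ : ∀ u, ∑ v, A u v ≤ Δ)
    {c B : ℝ} (hc : 0 ≤ c) {E : Matrix ι o ℝ} (hE : ∀ v, ‖E v‖ ≤ B) (u : ι) :
    ‖((A + c • (1 : Matrix ι ι ℝ)) * E) u‖ ≤ c * ‖E u‖ + B * Δ := by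
  have hB : 0 ≤ B := (norm_nonneg _).trans (hE u)
  rw [Matrix.add_mul, Matrix.smul_mul, Matrix.one_mul]
  calc ‖(A * E + c • E) u‖ ≤ c * ‖E u‖ + ‖(A * E) u‖ :=
        (norm_add_le ((A * E) u) (c • E u)).trans_eq <| by
          rw [norm_smul, Real.norm_of_nonneg hc, add_comm]
    _ ≤ c * ‖E u‖ + ∑ v, A u v * B := by
        gcongr
        refine (norm_mul_row_le_sum A E u).trans (sum_le_sum fun v _ => ?_)
        rw [Real.norm_of_nonneg (hA u v)]
        exact mul_le_mul_of_nonneg_left (hE v) (hA u v)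
    _ ≤ c * ‖E u‖ + B * Δ := by
        rw [← sum_mul, mul_comm B]
        gcongr
        exact hΔ u

theorem dist_map_row_le {ι o α β : Type*} [Fintype o] [PseudoMetricSpace α] [PseudoMetricSpace β]
    {φ : α → β} (hφ : LipschitzWith 1 φ) (M M' : Matrix ι o α) (u : ι) :
    dist (M.map φ u) (M'.map φ u) ≤ dist (M u) (M' u) :=
  (dist_pi_le_iff dist_nonneg).2 fun j =>
    (hφ.dist_le_mul _ _).trans (by simpa using dist_le_pi_dist (M u) (M' u) j)

theorem norm_gin_succ_sub_le {n : ℕ} {d : ℕ → ℕ} {ζ : ℝ} (hζ : 0 ≤ 1 + ζ) {φ : ℕ → ℝ → ℝ}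
    {A : Matrix (Fin n) (Fin n) ℝ} (hA : ∀ i j, 0 ≤ A i j) {Δ : ℝ}
    (hΔ : ∀ u, ∑ v, A u v ≤ Δ) (W : (ℓ : ℕ) → Matrix (Fin (d ℓ)) (Fin (d (ℓ + 1))) ℝ)
    {k : ℕ} (hφ : LipschitzWith 1 (φ (k + 1))) (X X' : Matrix (Fin n) (Fin (d 0)) ℝ) {B : ℝ}
    (hB : ∀ v, ‖gin d ζ φ A W X k v - gin d ζ φ A W X' k v‖ ≤ B) (u : Fin n) :
    ‖gin d ζ φ A W X (k + 1) u - gin d ζ φ A W X' (k + 1) u‖ ≤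
      opNormInf (W k) * ((1 + ζ) * ‖gin d ζ φ A W X k u - gin d ζ φ A W X' k u‖ + B * Δ) := by
  set M := A + (1 + ζ) • (1 : Matrix (Fin n) (Fin n) ℝ)
  set H := gin d ζ φ A W X k
  set H' := gin d ζ φ A W X' k
  calc ‖gin d ζ φ A W X (k + 1) u - gin d ζ φ A W X' (k + 1) u‖
      ≤ ‖(M * H * W k) u - (M * H' * W k) u‖ := by
        rw [← dist_eq_norm, ← dist_eq_norm]
        exact dist_map_row_le hφ _ _ u
    _ = ‖(M * (H - H')) u ᵥ* W k‖ := by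
        rw [← mul_apply_eq_vecMul, Matrix.mul_sub, Matrix.sub_mul]
        rfl
    _ ≤ opNormInf (W k) * ‖(M * (H - H')) u‖ := norm_vecMul_le_opNormInf_mul _ _
    _ ≤ opNormInf (W k) * ((1 + ζ) * ‖H u - H' u‖ + B * Δ) := by
        gcongr
        · exact opNormInf_nonneg _
        · exact norm_add_smul_one_mul_row_le hA hΔ hζ hB u

/-- General-`ζ` intermediate inequality from the proof of Theorem 3: on a graph with
0/1 adjacency matrix of maximum degree `Δ`, with weight matrices of `ℓ∞` operator norm
at least `1`, if every row of the feature perturbation has `ℓ∞` norm at most `ε` and at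
every intermediate layer the hidden-state rows of the two runs differ by at most `B` in
`ℓ∞` norm, then every output row differs by at most
`(∏ ℓ, ‖W⁽ˡ⁾‖_∞) · (B·Δ·∑_{l=1}^{L}(1+ζ)^l + (1+ζ)^L·ε)` in `ℓ∞` norm. -/
theorem gin_feature_attack_bound_general_zeta
    {n : ℕ} (L : ℕ) (d : ℕ → ℕ) (ζ : ℝ) (hζ : 0 ≤ ζ) (φ : ℕ → ℝ → ℝ)
    (A : Matrix (Fin n) (Fin n) ℝ) (hA : ∀ i j, A i j = 0 ∨ A i j = 1)
    (Δ : ℕ) (hΔ : ∀ u : Fin n, ∑ v : Fin n, A u v ≤ (Δ : ℝ))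
    (W : (ℓ : ℕ) → Matrix (Fin (d ℓ)) (Fin (d (ℓ + 1))) ℝ)
    (hφ : ∀ ℓ, LipschitzWith 1 (φ ℓ))
    (hW : ∀ ℓ < L, 1 ≤ opNormInf (W ℓ))
    (X X' : Matrix (Fin n) (Fin (d 0)) ℝ) (ε B : ℝ)
    (hX : ∀ v : Fin n, ‖X v - X' v‖ ≤ ε)
    (hB : ∀ ℓ < L, ∀ v : Fin n, ‖gin d ζ φ A W X ℓ v - gin d ζ φ A W X' ℓ v‖ ≤ B) :
    ∀ u : Fin n,
      ‖gin d ζ φ A W X L u - gin d ζ φ A W X' L u‖ ≤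
        (∏ ℓ ∈ Finset.range L, opNormInf (W ℓ)) *
          (B * (Δ : ℝ) * (∑ l ∈ Finset.Icc 1 L, (1 + ζ) ^ l) + (1 + ζ) ^ L * ε) := by
  intro u
  rcases Nat.eq_zero_or_pos L with rfl | hL
  · simpa [gin] using hX u
  have hB₀ : 0 ≤ B := (norm_nonneg _).trans (hB 0 hL u)
  have hA₀ : ∀ i j, 0 ≤ A i j := fun i j => (hA i j).elim (·.ge) fun h => h ▸ zero_le_one
  refine le_prod_mul_of_le_mul_add (a := fun k => ‖gin d ζ φ A W X k u - gin d ζ φ A W X' k u‖)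
    (by linarith) (mul_nonneg hB₀ Δ.cast_nonneg) hW (hX u) fun k hk =>
      norm_gin_succ_sub_le (by linarith) hA₀ hΔ W (hφ (k + 1)) X X' (hB k hk) u
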